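/- Let Ψ be a maximal closed subroot system of the untwisted affine root system Φ with Gr(Ψ) = Φ̊. Then there is a prime number q such that {r − r′ : r, r′ ∈ Z_α(Ψ)} = qℤ for every α ∈ Φ̊. -/

import Mathlib

noncomputable section

variable {V : Type*} [NormedAddCommGroup V] [InnerProductSpace ℝ V]

/-- The Cartan pairing `⟨β, α∨⟩ = 2(β,α)/(α,α)`. -/
def cartanPair (α β : V) : ℝ := 2 * (inner ℝ β α : ℝ) / (inner ℝ α α : ℝ)

/-- The reflection `s_α` on `V`: `s_α(β) = β - ⟨β,α∨⟩ α`. -/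
def reflV (α β : V) : V := β - cartanPair α β • α

/-- The affine reflection `s_x` on `V × ℝ` with respect to the bilinear form
`B((x,a),(y,b)) = (x,y)`. -/
def reflA (x y : V × ℝ) : V × ℝ :=
  y - (2 * (inner ℝ y.1 x.1 : ℝ) / (inner ℝ x.1 x.1 : ℝ)) • x

/-- A finite irreducible reduced crystallographic root system in `V`. -/
structure IsIrreducibleRootSystem (R : Set V) : Prop where
  finite : R.Finite
  spans : Submodule.span ℝ R = ⊤
  zero_notMem : (0 : V) ∉ R
  reduced : ∀ α ∈ R, ∀ c : ℝ, c • α ∈ R → c = 1 ∨ c = -1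
  cartan_int : ∀ α ∈ R, ∀ β ∈ R, ∃ n : ℤ, cartanPair α β = (n : ℝ)
  refl_mem : ∀ α ∈ R, ∀ β ∈ R, reflV α β ∈ R
  irred : ∀ A B : Set V, R = A ∪ B → A.Nonempty → B.Nonempty →
    ∃ a ∈ A, ∃ b ∈ B, (inner ℝ a b : ℝ) ≠ 0

/-- A subroot system of a set `Φ` of affine roots: a nonempty proper subset stable
under the reflections `s_x`, `x ∈ Ψ`. -/
def IsSubrootSystem (Φ Ψ : Set (V × ℝ)) : Prop :=
  Ψ.Nonempty ∧ Ψ ⊆ Φ ∧ Ψ ≠ Φ ∧ ∀ x ∈ Ψ, ∀ y ∈ Ψ, reflA x y ∈ Ψ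

/-- `Ψ` is closed in `Φ`. -/
def IsClosedIn (Φ Ψ : Set (V × ℝ)) : Prop := ∀ x ∈ Ψ, ∀ y ∈ Ψ, x + y ∈ Φ → x + y ∈ Ψ

def IsClosedSubrootSystem (Φ Ψ : Set (V × ℝ)) : Prop :=
  IsSubrootSystem Φ Ψ ∧ IsClosedIn Φ Ψ

/-- A maximal closed subroot system of `Φ`: any closed subroot system of `Φ`
containing it equals it. -/
def IsMaximalClosedSubrootSystem (Φ Ψ : Set (V × ℝ)) : Prop :=
  IsClosedSubrootSystem Φ Ψ ∧ ∀ Δ, IsClosedSubrootSystem Φ Δ → Ψ ⊆ Δ → Δ = Ψ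

/-- A subroot system of a finite root system `R`. -/
def IsSubrootSystemF (R S : Set V) : Prop :=
  S.Nonempty ∧ S ⊆ R ∧ S ≠ R ∧ ∀ α ∈ S, ∀ β ∈ S, reflV α β ∈ S

/-- `S` is closed in the finite root system `R`. -/
def IsClosedInF (R S : Set V) : Prop := ∀ α ∈ S, ∀ β ∈ S, α + β ∈ R → α + β ∈ S

def IsMaximalClosedSubrootSystemF (R S : Set V) : Prop :=
  (IsSubrootSystemF R S ∧ IsClosedInF R S) ∧
    ∀ T, IsSubrootSystemF R T → IsClosedInF R T → S ⊆ T → T = S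

/-- A `ℤ`-linear function on `S`: the restriction to `S` of an additive group
homomorphism from the subgroup of `V` generated by `S` to `ℤ`. -/
def IsZLinearOn (S : Set V) (p : V → ℤ) : Prop :=
  ∃ f : AddSubgroup.closure S →+ ℤ,
    ∀ α, ∀ h : α ∈ S, p α = f ⟨α, AddSubgroup.subset_closure h⟩

/-- An irreducible subset: nonempty and not a union of two nonempty mutually
orthogonal subsets. -/
def IsIrreducibleSubset (S : Set V) : Prop :=
  S.Nonempty ∧ ∀ A B : Set V, S = A ∪ B → A.Nonempty → B.Nonempty →
    ∃ a ∈ A, ∃ b ∈ B, (inner ℝ a b : ℝ) ≠ 0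

/-- The untwisted affine root system attached to `R`. -/
def affineRS (R : Set V) : Set (V × ℝ) := {x | x.1 ∈ R ∧ ∃ r : ℤ, x.2 = (r : ℝ)}

/-- The gradient of a set of affine roots. -/
def Gr (Ψ : Set (V × ℝ)) : Set V := {α | ∃ r : ℤ, (α, (r : ℝ)) ∈ Ψ}

/-- `Z_α(Ψ) = {r ∈ ℤ : α + rδ ∈ Ψ}`. -/
def ZSet (Ψ : Set (V × ℝ)) (α : V) : Set ℤ := {r | (α, (r : ℝ)) ∈ Ψ}

/-- The difference set `{r - r' : r, r' ∈ Z_α(Ψ)}`. -/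
def DiffSet (Ψ : Set (V × ℝ)) (α : V) : Set ℤ :=
  {d | ∃ r ∈ ZSet Ψ α, ∃ r' ∈ ZSet Ψ α, d = r - r'}

/-- The lift `Ŝ = {α + rδ : α ∈ S, r ∈ ℤ}` of a subset `S` of the finite root system. -/
def liftF (S : Set V) : Set (V × ℝ) := {x | x.1 ∈ S ∧ ∃ r : ℤ, x.2 = (r : ℝ)}

/-!
Reflections make each `Z_α(Ψ)` stable under `r ↦ 2s - r` for `s ∈ Z_α(Ψ)`, closedness gives
`Z_α(Ψ) + Z_β(Ψ) ⊆ Z_{α+β}(Ψ)`, and with irreducibility this makes the difference set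
`D = Z_α(Ψ) - Z_α(Ψ)` independent of `α`. For a proper subgroup `L ⊇ D` of `ℤ`, enlarging every
`Z_α(Ψ)` to `Z_α(Ψ) + L` gives a proper closed subroot system containing `Ψ`, so by maximality
`L ⊆ D`. If `D` generated `ℤ`, every `Z_α(Ψ)` would be invariant under `2ℤ` and meet both
residue classes mod `2`, so `Ψ = Φ`. Hence the subgroup generated by `D` is proper, equals `D`,
and is maximal in `ℤ`, i.e. it is `qℤ` with `q` prime.
-/

lemma Int.exists_prime_eq_zmultiples_of_isCoatom {H : AddSubgroup ℤ} (hH : IsCoatom H) :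
    ∃ q : ℕ, q.Prime ∧ H = AddSubgroup.zmultiples (q : ℤ) := by
  obtain ⟨g, rfl⟩ : ∃ g : ℤ, H = AddSubgroup.zmultiples g := by
    obtain ⟨g, hg⟩ := Int.subgroup_cyclic H
    exact ⟨g, hg.trans (AddSubgroup.zmultiples_eq_closure g).symm⟩
  rw [← Int.zmultiples_natAbs] at hH ⊢
  refine ⟨g.natAbs, ?_, rfl⟩
  have hdvd : ∀ m : ℕ, m ∣ g.natAbs → m = 1 ∨ m = g.natAbs := by
    intro m hm
    rcases hH.le_iff.1 (AddSubgroup.zmultiples_le.2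
        (Int.mem_zmultiples_iff.2 (Int.natCast_dvd_natCast.2 hm))) with h | h
    · have h1 := Int.mem_zmultiples_iff.1 (h ▸ AddSubgroup.mem_top (1 : ℤ))
      exact Or.inl (Nat.dvd_one.1 (Int.natCast_dvd_natCast.1 h1))
    · have h1 := Int.mem_zmultiples_iff.1 (h ▸ AddSubgroup.mem_zmultiples (m : ℤ))
      exact Or.inr (Nat.dvd_antisymm hm (Int.natCast_dvd_natCast.1 h1))
  refine Nat.prime_def.2 ⟨?_, hdvd⟩
  have h0 : g.natAbs ≠ 0 := fun h => by
    have := hdvd 2 (h ▸ dvd_zero 2)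
    omega
  have h1 : g.natAbs ≠ 1 := fun h => hH.1 (by rw [h, Nat.cast_one, Int.zmultiples_one])
  omega

lemma cartanPair_self {α : V} (h : α ≠ 0) : cartanPair α α = 2 := by
  rw [cartanPair, mul_div_assoc, div_self (inner_self_ne_zero.mpr h), mul_one]

lemma reflV_self {α : V} (h : α ≠ 0) : reflV α α = -α := by
  rw [reflV, cartanPair_self h, two_smul]; abel

lemma reflA_mk_intCast {α β : V} {n : ℤ} (hn : cartanPair α β = n) (r s : ℤ) :
    reflA (α, (r : ℝ)) (β, (s : ℝ)) = (reflV α β, ((s - n * r : ℤ) : ℝ)) := by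
  change (β, (s : ℝ)) - cartanPair α β • (α, (r : ℝ)) = _
  rw [hn, reflV, hn]
  ext <;> simp

lemma mk_intCast_add_mk_intCast {W : Type*} [Add W] (α β : W) (r s : ℤ) :
    ((α, (r : ℝ)) : W × ℝ) + (β, (s : ℝ)) = (α + β, ((r + s : ℤ) : ℝ)) := by
  rw [Prod.mk_add_mk, Int.cast_add]

lemma inner_le_neg_inner_self_of_cartanPair_le {α β : V} (hα : α ≠ 0)
    (h : cartanPair α β ≤ -2) : (inner ℝ β α : ℝ) ≤ -inner ℝ α α := by
  rw [cartanPair, div_le_iff₀ (real_inner_self_pos.mpr hα)] at h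
  linarith

namespace IsIrreducibleRootSystem

variable {R : Set V}

lemma ne_zero (hR : IsIrreducibleRootSystem R) {α : V} (hα : α ∈ R) : α ≠ 0 :=
  fun h => hR.zero_notMem (h ▸ hα)

lemma neg_mem (hR : IsIrreducibleRootSystem R) {α : V} (hα : α ∈ R) : -α ∈ R :=
  reflV_self (hR.ne_zero hα) ▸ hR.refl_mem α hα α hα

lemma cartanPair_lt_zero (hR : IsIrreducibleRootSystem R) {α β : V} (hα : α ∈ R)
    (hneg : (inner ℝ α β : ℝ) < 0) : cartanPair α β < 0 :=
  div_neg_of_neg_of_pos (by rw [real_inner_comm]; linarith)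
    (real_inner_self_pos.mpr (hR.ne_zero hα))

lemma add_mem_of_cartanPair_eq_neg_one (hR : IsIrreducibleRootSystem R) {α β : V}
    (hα : α ∈ R) (hβ : β ∈ R) (h : cartanPair α β = -1) : β + α ∈ R := by
  simpa [reflV, h] using hR.refl_mem α hα β hβ

/-- If neither Cartan integer is `-1`, both are `≤ -2`, which forces `‖α + β‖² ≤ 0`. -/
lemma add_mem_of_inner_neg (hR : IsIrreducibleRootSystem R) {α β : V} (hα : α ∈ R)
    (hβ : β ∈ R) (hneg : (inner ℝ α β : ℝ) < 0) (hsum : α + β ≠ 0) : α + β ∈ R := by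
  obtain ⟨n, hn⟩ := hR.cartan_int α hα β hβ
  obtain ⟨m, hm⟩ := hR.cartan_int β hβ α hα
  have hn0 : n < 0 := by exact_mod_cast hn ▸ hR.cartanPair_lt_zero hα hneg
  have hm0 : m < 0 := by
    exact_mod_cast hm ▸ hR.cartanPair_lt_zero hβ (by rwa [real_inner_comm])
  rcases eq_or_ne n (-1) with rfl | hn1
  · exact add_comm β α ▸ hR.add_mem_of_cartanPair_eq_neg_one hα hβ (by simpa using hn)
  rcases eq_or_ne m (-1) with rfl | hm1
  · exact hR.add_mem_of_cartanPair_eq_neg_one hβ hα (by simpa using hm)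
  have hβα := inner_le_neg_inner_self_of_cartanPair_le (hR.ne_zero hα)
    (by rw [hn]; exact_mod_cast (by omega : n ≤ -2))
  have hαβ := inner_le_neg_inner_self_of_cartanPair_le (hR.ne_zero hβ)
    (by rw [hm]; exact_mod_cast (by omega : m ≤ -2))
  refine absurd (inner_self_eq_zero (𝕜 := ℝ).mp (le_antisymm ?_ real_inner_self_nonneg)) hsum
  rw [real_inner_add_add_self]
  rw [real_inner_comm] at hβα
  linarith

end IsIrreducibleRootSystem

lemma mem_ZSet {W : Type*} {Ψ : Set (W × ℝ)} {α : W} {r : ℤ} :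
    r ∈ ZSet Ψ α ↔ ((α, (r : ℝ)) : W × ℝ) ∈ Ψ :=
  Iff.rfl

lemma exists_eq_mk_of_mem_affineRS {W : Type*} {R : Set W} {x : W × ℝ} (hx : x ∈ affineRS R) :
    ∃ α ∈ R, ∃ r : ℤ, x = (α, (r : ℝ)) := by
  obtain ⟨hα, r, hr⟩ := hx
  exact ⟨x.1, hα, r, Prod.ext rfl hr⟩

def saturation {W : Type*} (Ψ : Set (W × ℝ)) (L : AddSubgroup ℤ) : Set (W × ℝ) :=
  {x | ∃ r : ℤ, x.2 = r ∧ ∃ z ∈ ZSet Ψ x.1, r - z ∈ L}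

lemma mk_mem_saturation {W : Type*} {Ψ : Set (W × ℝ)} {L : AddSubgroup ℤ} {α : W} {r : ℤ} :
    ((α, (r : ℝ)) : W × ℝ) ∈ saturation Ψ L ↔ ∃ z ∈ ZSet Ψ α, r - z ∈ L := by
  refine ⟨?_, fun h => ⟨r, rfl, h⟩⟩
  rintro ⟨r', hr', h⟩
  rwa [Int.cast_injective hr']

namespace IsClosedSubrootSystem

variable {R : Set V} {Ψ : Set (V × ℝ)}

lemma mem_of_mem_ZSet (hΨ : IsClosedSubrootSystem (affineRS R) Ψ) {α : V} {r : ℤ}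
    (hr : r ∈ ZSet Ψ α) : α ∈ R :=
  (hΨ.1.2.1 hr).1

lemma sub_mul_mem_ZSet_reflV (hΨ : IsClosedSubrootSystem (affineRS R) Ψ) {α β : V} {n r s : ℤ}
    (hn : cartanPair α β = n) (hr : r ∈ ZSet Ψ α) (hs : s ∈ ZSet Ψ β) :
    s - n * r ∈ ZSet Ψ (reflV α β) := by
  rw [mem_ZSet, ← reflA_mk_intCast hn]
  exact hΨ.1.2.2.2 _ hr _ hs

lemma neg_mem_ZSet_neg (hΨ : IsClosedSubrootSystem (affineRS R) Ψ)
    (hR : IsIrreducibleRootSystem R) {α : V} {r : ℤ} (hr : r ∈ ZSet Ψ α) : -r ∈ ZSet Ψ (-α) := by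
  have hα := hR.ne_zero (hΨ.mem_of_mem_ZSet hr)
  have h := hΨ.sub_mul_mem_ZSet_reflV (n := 2) (by simp [cartanPair_self hα]) hr hr
  rwa [reflV_self hα, show r - 2 * r = -r by ring] at h

/-- Reflecting in `α + s'δ` and then in `-α - sδ` translates `α + mδ` by `2(s - s')δ`. -/
lemma add_two_mul_sub_mem_ZSet (hΨ : IsClosedSubrootSystem (affineRS R) Ψ)
    (hR : IsIrreducibleRootSystem R) {α : V} {m s s' : ℤ} (hm : m ∈ ZSet Ψ α)
    (hs : s ∈ ZSet Ψ α) (hs' : s' ∈ ZSet Ψ α) : m + 2 * (s - s') ∈ ZSet Ψ α := by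
  have hα := hR.ne_zero (hΨ.mem_of_mem_ZSet hm)
  have hα' : -α ≠ 0 := neg_ne_zero.mpr hα
  have h₁ := hΨ.sub_mul_mem_ZSet_reflV (n := 2) (by simp [cartanPair_self hα]) hs' hm
  have h₂ := hΨ.sub_mul_mem_ZSet_reflV (n := 2) (by simp [cartanPair_self hα'])
    (hΨ.neg_mem_ZSet_neg hR hs) (reflV_self hα ▸ h₁)
  rwa [reflV_self hα', neg_neg, show m - 2 * s' - 2 * -s = m + 2 * (s - s') by ring] at h₂

lemma add_mem_ZSet_add (hΨ : IsClosedSubrootSystem (affineRS R) Ψ) {α β : V} {r s : ℤ}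
    (hαβ : α + β ∈ R) (hr : r ∈ ZSet Ψ α) (hs : s ∈ ZSet Ψ β) : r + s ∈ ZSet Ψ (α + β) := by
  have hsum := mk_intCast_add_mk_intCast α β r s
  rw [mem_ZSet, ← hsum]
  exact hΨ.2 _ hr _ hs (hsum ▸ ⟨hαβ, r + s, rfl⟩)

lemma diffSet_subset_diffSet_add (hΨ : IsClosedSubrootSystem (affineRS R) Ψ) (hGr : Gr Ψ = R)
    {α β : V} (hα : α ∈ R) (hαβ : α + β ∈ R) : DiffSet Ψ β ⊆ DiffSet Ψ (α + β) := by
  rintro _ ⟨s, hs, s', hs', rfl⟩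
  obtain ⟨r, hr⟩ : α ∈ Gr Ψ := hGr ▸ hα
  exact ⟨r + s, hΨ.add_mem_ZSet_add hαβ hr hs, r + s', hΨ.add_mem_ZSet_add hαβ hr hs', by ring⟩

lemma diffSet_neg_subset (hΨ : IsClosedSubrootSystem (affineRS R) Ψ)
    (hR : IsIrreducibleRootSystem R) (α : V) : DiffSet Ψ (-α) ⊆ DiffSet Ψ α := by
  rintro _ ⟨s, hs, s', hs', rfl⟩
  exact ⟨-s', by simpa using hΨ.neg_mem_ZSet_neg hR hs', -s,
    by simpa using hΨ.neg_mem_ZSet_neg hR hs, by ring⟩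

lemma diffSet_neg (hΨ : IsClosedSubrootSystem (affineRS R) Ψ) (hR : IsIrreducibleRootSystem R)
    (α : V) : DiffSet Ψ (-α) = DiffSet Ψ α :=
  (hΨ.diffSet_neg_subset hR α).antisymm (by simpa using hΨ.diffSet_neg_subset hR (-α))

lemma diffSet_subset_of_add_mem (hΨ : IsClosedSubrootSystem (affineRS R) Ψ)
    (hR : IsIrreducibleRootSystem R) (hGr : Gr Ψ = R) {α β : V} (hα : α ∈ R) (hβ : β ∈ R)
    (hαβ : α + β ∈ R) : DiffSet Ψ α ⊆ DiffSet Ψ β := by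
  have hβα : β + α ∈ R := add_comm α β ▸ hαβ
  have hcancel : -α + (β + α) = β := by abel
  calc DiffSet Ψ α ⊆ DiffSet Ψ (β + α) := hΨ.diffSet_subset_diffSet_add hGr hβ hβα
    _ ⊆ DiffSet Ψ (-α + (β + α)) :=
      hΨ.diffSet_subset_diffSet_add hGr (hR.neg_mem hα) (by rwa [hcancel])
    _ = DiffSet Ψ β := by rw [hcancel]

lemma diffSet_eq_of_add_mem (hΨ : IsClosedSubrootSystem (affineRS R) Ψ)
    (hR : IsIrreducibleRootSystem R) (hGr : Gr Ψ = R) {α β : V} (hα : α ∈ R) (hβ : β ∈ R)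
    (hαβ : α + β ∈ R) : DiffSet Ψ α = DiffSet Ψ β :=
  (hΨ.diffSet_subset_of_add_mem hR hGr hα hβ hαβ).antisymm
    (hΨ.diffSet_subset_of_add_mem hR hGr hβ hα (add_comm α β ▸ hαβ))

lemma diffSet_eq_of_inner_ne_zero (hΨ : IsClosedSubrootSystem (affineRS R) Ψ)
    (hR : IsIrreducibleRootSystem R) (hGr : Gr Ψ = R) {α β : V} (hα : α ∈ R) (hβ : β ∈ R)
    (hαβ : (inner ℝ α β : ℝ) ≠ 0) : DiffSet Ψ α = DiffSet Ψ β := by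
  rcases eq_or_ne β (-α) with rfl | hβα
  · exact (hΨ.diffSet_neg hR α).symm
  rcases eq_or_ne β α with rfl | hβα'
  · rfl
  rcases hαβ.lt_or_gt with hlt | hgt
  · exact hΨ.diffSet_eq_of_add_mem hR hGr hα hβ
      (hR.add_mem_of_inner_neg hα hβ hlt fun h => hβα (eq_neg_of_add_eq_zero_right h))
  · have hsum : α + -β ∈ R := hR.add_mem_of_inner_neg hα (hR.neg_mem hβ)
      (by rw [inner_neg_right]; linarith) fun h => hβα' (add_neg_eq_zero.mp h).symm
    rw [hΨ.diffSet_eq_of_add_mem hR hGr hα (hR.neg_mem hβ) hsum, hΨ.diffSet_neg hR]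

/-- By irreducibility, the roots `β` with `DiffSet Ψ β = DiffSet Ψ α` cannot be orthogonal to
all the others. -/
lemma diffSet_eq (hΨ : IsClosedSubrootSystem (affineRS R) Ψ) (hR : IsIrreducibleRootSystem R)
    (hGr : Gr Ψ = R) {α β : V} (hα : α ∈ R) (hβ : β ∈ R) : DiffSet Ψ α = DiffSet Ψ β := by
  by_contra hne
  have hsplit : R = {γ | γ ∈ R ∧ DiffSet Ψ γ = DiffSet Ψ α} ∪
      {γ | γ ∈ R ∧ DiffSet Ψ γ ≠ DiffSet Ψ α} := by
    ext γ; by_cases DiffSet Ψ γ = DiffSet Ψ α <;> simp [*]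
  obtain ⟨a, ⟨haR, ha⟩, b, ⟨hbR, hb⟩, hab⟩ :=
    hR.irred _ _ hsplit ⟨α, hα, rfl⟩ ⟨β, hβ, Ne.symm hne⟩
  exact hb ((hΨ.diffSet_eq_of_inner_ne_zero hR hGr haR hbR hab).symm.trans ha)

lemma add_two_mul_mem_ZSet_of_mem_closure (hΨ : IsClosedSubrootSystem (affineRS R) Ψ)
    (hR : IsIrreducibleRootSystem R) {α : V} {k : ℤ}
    (hk : k ∈ AddSubgroup.closure (DiffSet Ψ α)) {m : ℤ} (hm : m ∈ ZSet Ψ α) :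
    m + 2 * k ∈ ZSet Ψ α := by
  induction hk using AddSubgroup.closure_induction'' generalizing m with
  | mem d hd =>
    obtain ⟨s, hs, s', hs', rfl⟩ := hd
    exact hΨ.add_two_mul_sub_mem_ZSet hR hm hs hs'
  | neg_mem d hd =>
    obtain ⟨s, hs, s', hs', rfl⟩ := hd
    simpa using hΨ.add_two_mul_sub_mem_ZSet hR hm hs' hs
  | zero => simpa using hm
  | add a b _ _ ha hb => simpa [mul_add, add_assoc] using hb (ha hm)

lemma ZSet_eq_univ_of_closure_diffSet_eq_top (hΨ : IsClosedSubrootSystem (affineRS R) Ψ)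
    (hR : IsIrreducibleRootSystem R) {α : V} (htop : AddSubgroup.closure (DiffSet Ψ α) = ⊤) :
    ZSet Ψ α = Set.univ := by
  obtain ⟨s, hs, s', hs', hodd⟩ : ∃ s ∈ ZSet Ψ α, ∃ s' ∈ ZSet Ψ α, ¬ (2 : ℤ) ∣ s - s' := by
    by_contra! h
    have hle : AddSubgroup.closure (DiffSet Ψ α) ≤ AddSubgroup.zmultiples 2 :=
      (AddSubgroup.closure_le _).2 fun _ ⟨s, hs, s', hs', hd⟩ =>
        hd ▸ Int.mem_zmultiples_iff.2 (h s hs s' hs')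
    exact absurd (Int.mem_zmultiples_iff.1 (hle (htop ▸ AddSubgroup.mem_top 1))) (by decide)
  have hshift : ∀ t ∈ ZSet Ψ α, ∀ m : ℤ, (2 : ℤ) ∣ m - t → m ∈ ZSet Ψ α := by
    rintro t ht m ⟨k, hk⟩
    have := hΨ.add_two_mul_mem_ZSet_of_mem_closure hR (htop ▸ AddSubgroup.mem_top k) ht
    rwa [show t + 2 * k = m by omega] at this
  refine Set.eq_univ_of_forall fun m => ?_
  by_cases hm : (2 : ℤ) ∣ m - s
  · exact hshift s hs m hm
  · exact hshift s' hs' m (by omega)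

lemma exists_closure_diffSet_ne_top (hΨ : IsClosedSubrootSystem (affineRS R) Ψ)
    (hR : IsIrreducibleRootSystem R) : ∃ α ∈ R, AddSubgroup.closure (DiffSet Ψ α) ≠ ⊤ := by
  by_contra! h
  refine hΨ.1.2.2.1 (hΨ.1.2.1.antisymm fun x hx => ?_)
  obtain ⟨α, hα, r, rfl⟩ := exists_eq_mk_of_mem_affineRS hx
  rw [← mem_ZSet, hΨ.ZSet_eq_univ_of_closure_diffSet_eq_top hR (h α hα)]
  exact Set.mem_univ r

lemma subset_saturation (hΨ : IsClosedSubrootSystem (affineRS R) Ψ) (L : AddSubgroup ℤ) :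
    Ψ ⊆ saturation Ψ L := by
  intro x hx
  obtain ⟨α, -, r, rfl⟩ := exists_eq_mk_of_mem_affineRS (hΨ.1.2.1 hx)
  exact mk_mem_saturation.2 ⟨r, hx, by simp⟩

lemma saturation_subset (hΨ : IsClosedSubrootSystem (affineRS R) Ψ) (L : AddSubgroup ℤ) :
    saturation Ψ L ⊆ affineRS R := by
  rintro x ⟨r, hr, z, hz, -⟩
  exact ⟨hΨ.mem_of_mem_ZSet hz, r, hr⟩

lemma saturation_ne (hΨ : IsClosedSubrootSystem (affineRS R) Ψ) {L : AddSubgroup ℤ}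
    (hL : L ≠ ⊤) (hDL : ∀ α ∈ R, DiffSet Ψ α ⊆ L) : saturation Ψ L ≠ affineRS R := by
  obtain ⟨x, hx⟩ := hΨ.1.1
  obtain ⟨α, hα, r, rfl⟩ := exists_eq_mk_of_mem_affineRS (hΨ.1.2.1 hx)
  obtain ⟨t, ht⟩ := SetLike.exists_not_mem_of_ne_top L hL
  intro h
  have hmem : ((α, ((r + t : ℤ) : ℝ)) : V × ℝ) ∈ saturation Ψ L := h ▸ ⟨hα, r + t, rfl⟩
  obtain ⟨z, hz, hzL⟩ := mk_mem_saturation.1 hmem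
  have := add_mem hzL (hDL α hα ⟨z, hz, r, hx, rfl⟩)
  exact ht (by rwa [show r + t - z + (z - r) = t by ring] at this)

lemma reflA_mem_saturation (hΨ : IsClosedSubrootSystem (affineRS R) Ψ)
    (hR : IsIrreducibleRootSystem R) {L : AddSubgroup ℤ} {x y : V × ℝ}
    (hx : x ∈ saturation Ψ L) (hy : y ∈ saturation Ψ L) : reflA x y ∈ saturation Ψ L := by
  obtain ⟨α, -, r, rfl⟩ := exists_eq_mk_of_mem_affineRS (hΨ.saturation_subset L hx)
  obtain ⟨β, -, s, rfl⟩ := exists_eq_mk_of_mem_affineRS (hΨ.saturation_subset L hy)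
  obtain ⟨z, hz, hrz⟩ := mk_mem_saturation.1 hx
  obtain ⟨w, hw, hsw⟩ := mk_mem_saturation.1 hy
  obtain ⟨n, hn⟩ := hR.cartan_int α (hΨ.mem_of_mem_ZSet hz) β (hΨ.mem_of_mem_ZSet hw)
  rw [reflA_mk_intCast hn, mk_mem_saturation]
  refine ⟨w - n * z, hΨ.sub_mul_mem_ZSet_reflV hn hz hw, ?_⟩
  have := sub_mem hsw (zsmul_mem hrz n)
  rwa [smul_eq_mul, show s - w - n * (r - z) = s - n * r - (w - n * z) by ring] at this

lemma add_mem_saturation (hΨ : IsClosedSubrootSystem (affineRS R) Ψ) {L : AddSubgroup ℤ}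
    {x y : V × ℝ} (hx : x ∈ saturation Ψ L) (hy : y ∈ saturation Ψ L)
    (hxy : x + y ∈ affineRS R) : x + y ∈ saturation Ψ L := by
  obtain ⟨α, -, r, rfl⟩ := exists_eq_mk_of_mem_affineRS (hΨ.saturation_subset L hx)
  obtain ⟨β, -, s, rfl⟩ := exists_eq_mk_of_mem_affineRS (hΨ.saturation_subset L hy)
  obtain ⟨z, hz, hrz⟩ := mk_mem_saturation.1 hx
  obtain ⟨w, hw, hsw⟩ := mk_mem_saturation.1 hy
  rw [mk_intCast_add_mk_intCast] at hxy ⊢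
  refine mk_mem_saturation.2 ⟨z + w, hΨ.add_mem_ZSet_add hxy.1 hz hw, ?_⟩
  have := add_mem hrz hsw
  rwa [show r - z + (s - w) = r + s - (z + w) by ring] at this

lemma isClosedSubrootSystem_saturation (hΨ : IsClosedSubrootSystem (affineRS R) Ψ)
    (hR : IsIrreducibleRootSystem R) {L : AddSubgroup ℤ} (hL : L ≠ ⊤)
    (hDL : ∀ α ∈ R, DiffSet Ψ α ⊆ L) : IsClosedSubrootSystem (affineRS R) (saturation Ψ L) :=
  ⟨⟨hΨ.1.1.mono (hΨ.subset_saturation L), hΨ.saturation_subset L, hΨ.saturation_ne hL hDL,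
    fun _ hx _ hy => hΨ.reflA_mem_saturation hR hx hy⟩,
    fun _ hx _ hy hxy => hΨ.add_mem_saturation hx hy hxy⟩

end IsClosedSubrootSystem

lemma IsMaximalClosedSubrootSystem.coe_subset_diffSet {R : Set V} {Ψ : Set (V × ℝ)}
    (hΨ : IsMaximalClosedSubrootSystem (affineRS R) Ψ) (hR : IsIrreducibleRootSystem R)
    {L : AddSubgroup ℤ} (hL : L ≠ ⊤) (hDL : ∀ α ∈ R, DiffSet Ψ α ⊆ L) {α : V} {r : ℤ}
    (hr : r ∈ ZSet Ψ α) : (L : Set ℤ) ⊆ DiffSet Ψ α := by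
  have heq := hΨ.2 _ (hΨ.1.isClosedSubrootSystem_saturation hR hL hDL) (hΨ.1.subset_saturation L)
  intro l hl
  refine ⟨r + l, ?_, r, hr, by ring⟩
  rw [mem_ZSet, ← heq, mk_mem_saturation]
  exact ⟨r, hr, by simpa using hl⟩

theorem statement2_general
    {V : Type*} [NormedAddCommGroup V] [InnerProductSpace ℝ V]
    (R : Set V) (hR : IsIrreducibleRootSystem R)
    (Ψ : Set (V × ℝ)) (hΨ : IsMaximalClosedSubrootSystem (affineRS R) Ψ)
    (hGr : Gr Ψ = R) :
    ∃ q : ℕ, q.Prime ∧ ∀ α ∈ R, DiffSet Ψ α = {d : ℤ | (q : ℤ) ∣ d} := by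
  obtain ⟨α₀, hα₀, hne⟩ := hΨ.1.exists_closure_diffSet_ne_top hR
  obtain ⟨r₀, hr₀⟩ : α₀ ∈ Gr Ψ := hGr ▸ hα₀
  set D := DiffSet Ψ α₀
  have hD : ∀ α ∈ R, DiffSet Ψ α = D := fun α hα => hΨ.1.diffSet_eq hR hGr hα hα₀
  have hsub : ∀ L : AddSubgroup ℤ, L ≠ ⊤ → D ⊆ L → (L : Set ℤ) ⊆ D := fun L hL hDL =>
    hΨ.coe_subset_diffSet hR hL (fun α hα => hD α hα ▸ hDL) hr₀
  have hclosure : (AddSubgroup.closure D : Set ℤ) = D :=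
    (hsub _ hne AddSubgroup.subset_closure).antisymm AddSubgroup.subset_closure
  have hcoatom : IsCoatom (AddSubgroup.closure D) := by
    refine ⟨hne, fun L hlt => by_contra fun hL => hlt.not_ge ?_⟩
    exact (hsub L hL (AddSubgroup.subset_closure.trans hlt.le)).trans AddSubgroup.subset_closure
  obtain ⟨q, hq, hDq⟩ := Int.exists_prime_eq_zmultiples_of_isCoatom hcoatom
  refine ⟨q, hq, fun α hα => ?_⟩
  ext d
  rw [hD α hα, ← hclosure, hDq]
  exact Int.mem_zmultiples_iff

/-- For a maximal closed subroot system `Ψ` of the untwisted affine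
root system with `Gr(Ψ) = Φ̊`, there is a prime `q` with
`{r − r' : r, r' ∈ Z_α(Ψ)} = qℤ` for every `α ∈ Φ̊`. -/
theorem statement2
    {V : Type*} [NormedAddCommGroup V] [InnerProductSpace ℝ V] [FiniteDimensional ℝ V]
    (R : Set V) (hR : IsIrreducibleRootSystem R)
    (Ψ : Set (V × ℝ)) (hΨ : IsMaximalClosedSubrootSystem (affineRS R) Ψ)
    (hGr : Gr Ψ = R) :
    ∃ q : ℕ, q.Prime ∧ ∀ α ∈ R, DiffSet Ψ α = {d : ℤ | (q : ℤ) ∣ d} :=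
  statement2_general R hR Ψ hΨ hGr
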